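/- arXiv:2205.14840 — 7 statements merged into one kernel-verified Lean document; each statement's English description precedes it below -/
import Mathlib

section
/- Let θ₁ and θ₂ be real numbers with θ₁ ≠ θ₂, let γ > 0, and let θ̂₁, θ̂₂ be independent real-valued random variables with θ̂₁ ~ N(θ₁, γ²) and θ̂₂ ~ N(θ₂, γ²). Let w = (θ̂₁ + θ̂₂)/2 be the standard FL (FedAvg) model. Then the expected GM-Appeal of w satisfies E[(1/2)(𝟙{(w−θ₁)² < (θ̂₁−θ₁)²} + 𝟙{(w−θ₂)² < (θ̂₂−θ₂)²})] ≤ 2·exp(−γ_G²/(5γ²)), where γ_G² = ((θ₂−θ₁)/2)². -/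
/-!
Write `d = θ₂ - θ₁`. The average is appealing to client 1 iff `(X - Y) (3X + Y - 4θ₁) > 0`, and
then `d (X - Y) ≥ 0` or `d (3X + Y - 4θ₁) ≤ 0`. Each of these events says that a centred linear
combination of the independent Gaussians `X`, `Y` exceeds `d²`, and the sub-Gaussian Chernoff bound
bounds their probabilities by `exp (-d² / (4γ²))` and `exp (-d² / (20γ²))`. Client 2 is symmetric.
-/

open MeasureTheory ProbabilityTheory

open scoped NNReal

lemma le_or_le_of_sq_sub_lt_sq (x y θ₁ θ₂ : ℝ) (h : ((x + y) / 2 - θ₁) ^ 2 < (x - θ₁) ^ 2) :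
    (θ₂ - θ₁) ^ 2 ≤ (θ₂ - θ₁) * (x - θ₁) + -(θ₂ - θ₁) * (y - θ₂) ∨
      (θ₂ - θ₁) ^ 2 ≤ -(3 * (θ₂ - θ₁)) * (x - θ₁) + -(θ₂ - θ₁) * (y - θ₂) := by
  have hprod : 0 < (x - y) * (3 * x + y - 4 * θ₁) := by nlinarith
  by_contra! hneg
  obtain ⟨h₁, h₂⟩ := hneg
  nlinarith [mul_nonneg (sq_nonneg (θ₂ - θ₁)) hprod.le,
    mul_neg_of_neg_of_pos (sub_neg.2 h₁) (sub_pos.2 h₂)]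

lemma neg_sq_sq_div_le {d v k : ℝ} (hv : 0 ≤ v) (hk : 0 < k) (hk₁₀ : k ≤ 10) :
    -(d ^ 2) ^ 2 / (2 * (k * d ^ 2 * v)) ≤ -(d / 2) ^ 2 / (5 * v) := by
  rcases eq_or_ne d 0 with rfl | hd
  · simp
  rcases hv.eq_or_lt with rfl | hv
  · simp
  have hsimp : -(d ^ 2) ^ 2 / (2 * (k * d ^ 2 * v)) = -(d / 2) ^ 2 / (k / 2 * v) := by
    field_simp
  rw [hsimp, neg_div, neg_div, neg_le_neg_iff]
  gcongr
  linarith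

section Gaussian

variable {Ω : Type*} [MeasurableSpace Ω] {μ : Measure Ω}

lemma integral_ite_one_zero {p : Ω → Prop} [DecidablePred p] (hp : MeasurableSet {ω | p ω}) :
    ∫ ω, (if p ω then (1 : ℝ) else 0) ∂μ = μ.real {ω | p ω} := by
  simpa [Set.indicator_apply] using integral_indicator_one (μ := μ) hp

lemma integrable_ite_one_zero [IsFiniteMeasure μ] {p : Ω → Prop} [DecidablePred p]
    (hp : MeasurableSet {ω | p ω}) :
    Integrable (fun ω ↦ if p ω then (1 : ℝ) else 0) μ := by
  refine ((integrable_const (1 : ℝ)).indicator hp).congr (ae_of_all _ fun ω ↦ ?_)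
  simp [Set.indicator_apply]

variable [IsProbabilityMeasure μ]

lemma hasSubgaussianMGF_sub_of_map_eq_gaussianReal {X : Ω → ℝ} (hXm : Measurable X) {m : ℝ}
    {v : ℝ≥0} (hX : μ.map X = gaussianReal m v) :
    HasSubgaussianMGF (fun ω ↦ X ω - m) v μ := by
  have hmap : μ.map (fun ω ↦ X ω - m) = gaussianReal 0 v := by
    rw [← Function.comp_def (· - m) X, ← Measure.map_map (measurable_sub_const m) hXm, hX,
      gaussianReal_map_sub_const, sub_self]
  refine ⟨fun t ↦ mgf_pos_iff.mp ?_, fun t ↦ ?_⟩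
  · rw [mgf_gaussianReal hmap]
    exact Real.exp_pos _
  · rw [mgf_gaussianReal hmap, zero_mul, zero_add]

lemma measureReal_linearComb_ge_le_of_gaussianReal {X Y : Ω → ℝ} (hXm : Measurable X)
    (hYm : Measurable Y) {m₁ m₂ : ℝ} {v₁ v₂ : ℝ≥0} (hX : μ.map X = gaussianReal m₁ v₁)
    (hY : μ.map Y = gaussianReal m₂ v₂) (hindep : IndepFun X Y μ) (a b : ℝ) {t : ℝ}
    (ht : 0 ≤ t) :
    μ.real {ω | t ≤ a * (X ω - m₁) + b * (Y ω - m₂)}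
      ≤ Real.exp (-t ^ 2 / (2 * (a ^ 2 * v₁ + b ^ 2 * v₂))) := by
  have hsum := ((hasSubgaussianMGF_sub_of_map_eq_gaussianReal hXm hX).const_mul a).add_of_indepFun
    ((hasSubgaussianMGF_sub_of_map_eq_gaussianReal hYm hY).const_mul b)
    (hindep.comp (φ := fun x ↦ a * (x - m₁)) (ψ := fun y ↦ b * (y - m₂)) (by fun_prop)
      (by fun_prop))
  exact hsum.measure_ge_le ht

lemma measureReal_fedAvg_appealing_le {X Y : Ω → ℝ} (hXm : Measurable X) (hYm : Measurable Y)
    {θ₁ θ₂ : ℝ} {v : ℝ≥0} (hX : μ.map X = gaussianReal θ₁ v) (hY : μ.map Y = gaussianReal θ₂ v)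
    (hindep : IndepFun X Y μ) :
    μ.real {ω | ((X ω + Y ω) / 2 - θ₁) ^ 2 < (X ω - θ₁) ^ 2}
      ≤ 2 * Real.exp (-((θ₂ - θ₁) / 2) ^ 2 / (5 * v)) := by
  set d := θ₂ - θ₁
  have hsub : {ω | ((X ω + Y ω) / 2 - θ₁) ^ 2 < (X ω - θ₁) ^ 2}
      ⊆ {ω | d ^ 2 ≤ d * (X ω - θ₁) + -d * (Y ω - θ₂)}
        ∪ {ω | d ^ 2 ≤ -(3 * d) * (X ω - θ₁) + -d * (Y ω - θ₂)} :=
    fun ω hω ↦ le_or_le_of_sq_sub_lt_sq _ _ θ₁ θ₂ hω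
  have htail (a b k : ℝ) (hk : 0 < k) (hk₁₀ : k ≤ 10) (hab : a ^ 2 + b ^ 2 = k * d ^ 2) :
      μ.real {ω | d ^ 2 ≤ a * (X ω - θ₁) + b * (Y ω - θ₂)}
        ≤ Real.exp (-(d / 2) ^ 2 / (5 * v)) := by
    refine (measureReal_linearComb_ge_le_of_gaussianReal hXm hYm hX hY hindep a b
      (sq_nonneg d)).trans (Real.exp_le_exp.2 ?_)
    rw [← add_mul, hab]
    exact neg_sq_sq_div_le v.2 hk hk₁₀
  calc _ ≤ _ := measureReal_mono hsub
    _ ≤ _ := measureReal_union_le _ _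
    _ ≤ _ := by
      rw [two_mul]
      gcongr
      · exact htail _ _ 2 two_pos (by norm_num) (by ring)
      · exact htail _ _ 10 (by norm_num) le_rfl (by ring)

end Gaussian

theorem fedavg_gm_appeal_upper_bound_general
    {Ω : Type*} [MeasurableSpace Ω] (μ : Measure Ω) [IsProbabilityMeasure μ]
    (θ₁ θ₂ γ : ℝ)
    (X Y : Ω → ℝ) (hXm : Measurable X) (hYm : Measurable Y)
    (hX : Measure.map X μ = gaussianReal θ₁ ((γ ^ 2).toNNReal))
    (hY : Measure.map Y μ = gaussianReal θ₂ ((γ ^ 2).toNNReal))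
    (hindep : IndepFun X Y μ) :
    ∫ ω, (1 / 2 : ℝ) *
        ((if ((X ω + Y ω) / 2 - θ₁) ^ 2 < (X ω - θ₁) ^ 2 then (1 : ℝ) else 0)
          + (if ((X ω + Y ω) / 2 - θ₂) ^ 2 < (Y ω - θ₂) ^ 2 then (1 : ℝ) else 0)) ∂μ
      ≤ 2 * Real.exp (-(((θ₂ - θ₁) / 2) ^ 2) / (5 * γ ^ 2)) := by
  have hv : (((γ ^ 2).toNNReal : ℝ≥0) : ℝ) = γ ^ 2 := Real.coe_toNNReal _ (sq_nonneg γ)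
  have h₁ := measureReal_fedAvg_appealing_le hXm hYm hX hY hindep
  have h₂ := measureReal_fedAvg_appealing_le hYm hXm hY hX hindep.symm
  simp only [add_comm (Y _) (X _), hv] at h₁ h₂
  rw [show ((θ₁ - θ₂) / 2) ^ 2 = ((θ₂ - θ₁) / 2) ^ 2 by ring] at h₂
  have hS₁ : MeasurableSet {ω | ((X ω + Y ω) / 2 - θ₁) ^ 2 < (X ω - θ₁) ^ 2} :=
    measurableSet_lt (by fun_prop) (by fun_prop)
  have hS₂ : MeasurableSet {ω | ((X ω + Y ω) / 2 - θ₂) ^ 2 < (Y ω - θ₂) ^ 2} :=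
    measurableSet_lt (by fun_prop) (by fun_prop)
  rw [integral_const_mul, integral_add (integrable_ite_one_zero hS₁) (integrable_ite_one_zero hS₂),
    integral_ite_one_zero hS₁, integral_ite_one_zero hS₂]
  linarith

theorem fedavg_gm_appeal_upper_bound
    {Ω : Type*} [MeasurableSpace Ω] (μ : Measure Ω) [IsProbabilityMeasure μ]
    (θ₁ θ₂ γ : ℝ) (hne : θ₁ ≠ θ₂) (hγ : 0 < γ)
    (X Y : Ω → ℝ) (hXm : Measurable X) (hYm : Measurable Y)
    (hX : Measure.map X μ = gaussianReal θ₁ ((γ ^ 2).toNNReal))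
    (hY : Measure.map Y μ = gaussianReal θ₂ ((γ ^ 2).toNNReal))
    (hindep : IndepFun X Y μ) :
    ∫ ω, (1 / 2 : ℝ) *
        ((if ((X ω + Y ω) / 2 - θ₁) ^ 2 < (X ω - θ₁) ^ 2 then (1 : ℝ) else 0)
          + (if ((X ω + Y ω) / 2 - θ₂) ^ 2 < (Y ω - θ₂) ^ 2 then (1 : ℝ) else 0)) ∂μ
      ≤ 2 * Real.exp (-(((θ₂ - θ₁) / 2) ^ 2) / (5 * γ ^ 2)) :=
  fedavg_gm_appeal_upper_bound_general μ θ₁ θ₂ γ X Y hXm hYm hX hY hindep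
end

section
/- Let θ₁ and θ₂ be real numbers with θ₁ ≠ θ₂, let γ > 0, and let θ̂₁, θ̂₂ be independent real-valued random variables with θ̂₁ ~ N(θ₁, γ²) and θ̂₂ ~ N(θ₂, γ²). With w = (θ̂₁ + θ̂₂)/2, the probability that w is appealing to client 1 is bounded as P((w−θ₁)² < (θ̂₁−θ₁)²) ≤ 2·exp(−γ_G²/(5γ²)), where γ_G² = ((θ₂−θ₁)/2)². -/
open MeasureTheory ProbabilityTheory Real
open scoped NNReal ENNReal

/-! Since `((x + y) / 2 - θ₁) ^ 2 - (x - θ₁) ^ 2 = (y - x) * (y + 3 * x - 4 * θ₁) / 4`, client 1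
finds the average appealing only when the linear forms `Y - X` and `Y + 3 X - 4 θ₁` have opposite
signs. After multiplication by `d = θ₂ - θ₁` both are Gaussian with the same positive mean `d ^ 2`
(and variances `2 d² γ²`, `10 d² γ²`), so the event lies in the union of their lower tails at `0`,
and the Chernoff bounds `exp (-d² / (4 γ²))` and `exp (-d² / (20 γ²))` add up to at most
`2 exp (-(d / 2)² / (5 γ²))`. -/

namespace ProbabilityTheory

lemma gaussianReal_real_Iic_le {m x : ℝ} {v : ℝ≥0} (hv : v ≠ 0) (hx : x ≤ m) :
    (gaussianReal m v).real (Set.Iic x) ≤ exp (-(m - x) ^ 2 / (2 * v)) := by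
  have hv' : (0 : ℝ) < v := by positivity
  have hchernoff := measure_le_le_exp_mul_mgf (X := fun y : ℝ ↦ y) (μ := gaussianReal m v) x
    (t := (x - m) / v) (div_nonpos_of_nonpos_of_nonneg (by linarith) hv'.le)
    (integrable_exp_mul_gaussianReal _)
  rw [mgf_fun_id_gaussianReal, ← exp_add] at hchernoff
  convert hchernoff using 2
  · rfl
  · field_simp
    ring

lemma measure_le_le_of_map_eq_gaussianReal {Ω : Type*} [MeasurableSpace Ω] {μ : Measure Ω}
    {Z : Ω → ℝ} {m x : ℝ} {v : ℝ≥0} (hZ : μ.map Z = gaussianReal m v) (hv : v ≠ 0)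
    (hx : x ≤ m) :
    μ {ω | Z ω ≤ x} ≤ ENNReal.ofReal (exp (-(m - x) ^ 2 / (2 * v))) := by
  have hZm : AEMeasurable Z μ := aemeasurable_of_map_neZero (by rw [hZ]; infer_instance)
  have : μ {ω | Z ω ≤ x} = gaussianReal m v (Set.Iic x) := by
    rw [← hZ, Measure.map_apply₀ hZm measurableSet_Iic.nullMeasurableSet]; rfl
  rw [this, ← ofReal_measureReal]
  exact ENNReal.ofReal_le_ofReal (gaussianReal_real_Iic_le hv hx)

lemma IndepFun.map_const_mul_add_const_mul_eq_gaussianReal {Ω : Type*} [MeasurableSpace Ω]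
    {μ : Measure Ω} {X Y : Ω → ℝ} {m₁ m₂ : ℝ} {v₁ v₂ : ℝ≥0} (hXY : IndepFun X Y μ)
    (hX : μ.map X = gaussianReal m₁ v₁) (hY : μ.map Y = gaussianReal m₂ v₂) (a b : ℝ) :
    μ.map (fun ω ↦ a * X ω + b * Y ω) = gaussianReal (a * m₁ + b * m₂)
      (NNReal.mk (a ^ 2) (sq_nonneg a) * v₁ + NNReal.mk (b ^ 2) (sq_nonneg b) * v₂) := by
  have hXm : AEMeasurable X μ := aemeasurable_of_map_neZero (by rw [hX]; infer_instance)
  have hYm : AEMeasurable Y μ := aemeasurable_of_map_neZero (by rw [hY]; infer_instance)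
  have haX : μ.map (fun ω ↦ a * X ω)
      = gaussianReal (a * m₁) (NNReal.mk (a ^ 2) (sq_nonneg a) * v₁) := by
    rw [← gaussianReal_map_const_mul, ← hX, AEMeasurable.map_map_of_aemeasurable (by fun_prop) hXm]
    rfl
  have hbY : μ.map (fun ω ↦ b * Y ω)
      = gaussianReal (b * m₂) (NNReal.mk (b ^ 2) (sq_nonneg b) * v₂) := by
    rw [← gaussianReal_map_const_mul, ← hY, AEMeasurable.map_map_of_aemeasurable (by fun_prop) hYm]
    rfl
  exact gaussianReal_add_gaussianReal_of_indepFun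
    (hXY.comp (measurable_const_mul a) (measurable_const_mul b)) haX hbY

lemma IndepFun.measure_const_mul_add_const_mul_le_le {Ω : Type*} [MeasurableSpace Ω]
    {μ : Measure Ω} {X Y : Ω → ℝ} {m₁ m₂ a b x : ℝ} {v : ℝ≥0} (hXY : IndepFun X Y μ)
    (hX : μ.map X = gaussianReal m₁ v) (hY : μ.map Y = gaussianReal m₂ v) (hv : v ≠ 0)
    (ha : a ≠ 0) (hx : x ≤ a * m₁ + b * m₂) :
    μ {ω | a * X ω + b * Y ω ≤ x}
      ≤ ENNReal.ofReal (exp (-(a * m₁ + b * m₂ - x) ^ 2 / (2 * ((a ^ 2 + b ^ 2) * v)))) := by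
  have hvar : NNReal.mk (a ^ 2) (sq_nonneg a) * v + NNReal.mk (b ^ 2) (sq_nonneg b) * v ≠ 0 := by
    rw [← NNReal.coe_ne_zero]
    simp only [NNReal.coe_add, NNReal.coe_mul, NNReal.coe_mk]
    have : (0 : ℝ) < v := by positivity
    positivity
  convert measure_le_le_of_map_eq_gaussianReal
    (hXY.map_const_mul_add_const_mul_eq_gaussianReal hX hY a b) hvar hx using 5
  simp only [NNReal.coe_add, NNReal.coe_mul, NNReal.coe_mk]
  ring

end ProbabilityTheory

lemma le_zero_or_le_of_sq_midpoint_sub_lt {x y θ d : ℝ}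
    (h : ((x + y) / 2 - θ) ^ 2 < (x - θ) ^ 2) :
    -d * x + d * y ≤ 0 ∨ 3 * d * x + d * y ≤ 4 * θ * d := by
  by_contra! hpos
  nlinarith [mul_pos hpos.1 (sub_pos.2 hpos.2), mul_le_mul_of_nonneg_left h.le (sq_nonneg d)]

theorem fedavg_client_appeal_prob_upper_bound_general
    {Ω : Type*} [MeasurableSpace Ω] (μ : Measure Ω)
    (θ₁ θ₂ γ : ℝ) (hne : θ₁ ≠ θ₂) (hγ : 0 < γ)
    (X Y : Ω → ℝ)
    (hX : Measure.map X μ = gaussianReal θ₁ ((γ ^ 2).toNNReal))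
    (hY : Measure.map Y μ = gaussianReal θ₂ ((γ ^ 2).toNNReal))
    (hindep : IndepFun X Y μ) :
    μ {ω | ((X ω + Y ω) / 2 - θ₁) ^ 2 < (X ω - θ₁) ^ 2}
      ≤ ENNReal.ofReal (2 * Real.exp (-(((θ₂ - θ₁) / 2) ^ 2) / (5 * γ ^ 2))) := by
  set d := θ₂ - θ₁
  have hd : d ≠ 0 := sub_ne_zero.2 hne.symm
  have hv : (γ ^ 2).toNNReal ≠ 0 := by simpa using hγ.ne'
  have hγ2 : ((γ ^ 2).toNNReal : ℝ) = γ ^ 2 := Real.coe_toNNReal _ (sq_nonneg γ)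
  have hA := hindep.measure_const_mul_add_const_mul_le_le hX hY hv (neg_ne_zero.2 hd)
    (x := 0) (b := d) (by nlinarith [sq_nonneg d])
  have hB := hindep.measure_const_mul_add_const_mul_le_le hX hY hv
    (mul_ne_zero three_ne_zero hd) (x := 4 * θ₁ * d) (b := d) (by nlinarith [sq_nonneg d])
  calc μ {ω | ((X ω + Y ω) / 2 - θ₁) ^ 2 < (X ω - θ₁) ^ 2}
      ≤ μ ({ω | -d * X ω + d * Y ω ≤ 0} ∪ {ω | 3 * d * X ω + d * Y ω ≤ 4 * θ₁ * d}) :=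
        measure_mono fun ω ↦ le_zero_or_le_of_sq_midpoint_sub_lt
    _ ≤ μ {ω | -d * X ω + d * Y ω ≤ 0} + μ {ω | 3 * d * X ω + d * Y ω ≤ 4 * θ₁ * d} :=
        measure_union_le _ _
    _ ≤ ENNReal.ofReal (exp (-(d / 2) ^ 2 / (5 * γ ^ 2)))
          + ENNReal.ofReal (exp (-(d / 2) ^ 2 / (5 * γ ^ 2))) := by
        gcongr
        · refine hA.trans (ENNReal.ofReal_le_ofReal (exp_le_exp.2 ?_))
          rw [hγ2, div_le_div_iff₀ (by positivity) (by positivity)]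
          nlinarith [sq_nonneg d, sq_nonneg γ]
        · refine hB.trans_eq (congrArg _ (congrArg _ ?_))
          rw [hγ2]
          field_simp
          ring
    _ = ENNReal.ofReal (2 * exp (-(d / 2) ^ 2 / (5 * γ ^ 2))) := by
        rw [← ENNReal.ofReal_add (exp_pos _).le (exp_pos _).le, two_mul]

theorem fedavg_client_appeal_prob_upper_bound
    {Ω : Type*} [MeasurableSpace Ω] (μ : Measure Ω) [IsProbabilityMeasure μ]
    (θ₁ θ₂ γ : ℝ) (hne : θ₁ ≠ θ₂) (hγ : 0 < γ)
    (X Y : Ω → ℝ) (hXm : Measurable X) (hYm : Measurable Y)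
    (hX : Measure.map X μ = gaussianReal θ₁ ((γ ^ 2).toNNReal))
    (hY : Measure.map Y μ = gaussianReal θ₂ ((γ ^ 2).toNNReal))
    (hindep : IndepFun X Y μ) :
    μ {ω | ((X ω + Y ω) / 2 - θ₁) ^ 2 < (X ω - θ₁) ^ 2}
      ≤ ENNReal.ofReal (2 * Real.exp (-(((θ₂ - θ₁) / 2) ^ 2) / (5 * γ ^ 2))) :=
  fedavg_client_appeal_prob_upper_bound_general μ θ₁ θ₂ γ hne hγ X Y hX hY hindep
end

section
/- Let a and b be real numbers with b − a > 4 (equivalently γ̂_G = (b−a)/2 > 2). Then the midpoint w = (a+b)/2 is a local maximum of the two-client MaxFL objective v(w) = (1/2)σ((w−a)²) + (1/2)σ((w−b)²); in particular v'((a+b)/2) = 0 and v''((a+b)/2) < 0. -/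
/-!
Write the objective as `½ φ ((w - a) ^ 2) + ½ φ ((w - b) ^ 2)` for a general twice differentiable
`φ`. At the midpoint both squares equal `x = ((b - a) / 2) ^ 2`, so the first derivatives cancel and
`v'' = 2 (φ' x + 2 x φ'' x)`. For `φ = σ` we have `σ' = σ (1 - σ)` and `σ'' = σ' (1 - 2σ)`, so `v''`
has the sign of `1 - 2x (2σ(x) - 1)`. The bound `2σ(x) - 1 ≥ x / (x + 2)`, a consequence of
`exp x ≥ 1 + x`, makes this negative as soon as `x ≥ 2`, which holds when `b - a > 4`.
-/

noncomputable def sigmoid (x : ℝ) : ℝ := 1 / (1 + Real.exp (-x))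

lemma sigmoid_eq_real_sigmoid : sigmoid = Real.sigmoid := by
  funext x
  rw [sigmoid, Real.sigmoid_def, one_div]

lemma hasDerivAt_sigmoid_mul_one_sub_sigmoid (x : ℝ) :
    HasDerivAt (fun x => Real.sigmoid x * (1 - Real.sigmoid x))
      (Real.sigmoid x * (1 - Real.sigmoid x) * (1 - 2 * Real.sigmoid x)) x := by
  have hσ := Real.hasDerivAt_sigmoid x
  exact (hσ.fun_mul (hσ.const_sub 1)).congr_deriv (by ring)

lemma div_add_two_le_two_mul_sigmoid_sub_one {x : ℝ} (hx : 0 ≤ x) :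
    x / (x + 2) ≤ 2 * Real.sigmoid x - 1 := by
  have hu : Real.exp (-x) * (1 + x) ≤ 1 := by
    calc Real.exp (-x) * (1 + x) ≤ Real.exp (-x) * Real.exp x := by
          gcongr; linarith [Real.add_one_le_exp x]
      _ = 1 := by rw [← Real.exp_add, neg_add_cancel, Real.exp_zero]
  have hpos : 0 < 1 + Real.exp (-x) := by positivity
  rw [Real.sigmoid_def, div_le_iff₀ (by linarith)]
  field_simp
  nlinarith

lemma sigmoid_deriv_add_two_mul_deriv_deriv_neg {x : ℝ} (hx : 2 ≤ x) :
    Real.sigmoid x * (1 - Real.sigmoid x) +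
      2 * x * (Real.sigmoid x * (1 - Real.sigmoid x) * (1 - 2 * Real.sigmoid x)) < 0 := by
  have hσ' : 0 < Real.sigmoid x * (1 - Real.sigmoid x) :=
    mul_pos (Real.sigmoid_pos x) (sub_pos.mpr (Real.sigmoid_lt_one x))
  have hbound := div_add_two_le_two_mul_sigmoid_sub_one (x := x) (by linarith)
  rw [div_le_iff₀ (by linarith)] at hbound
  have hfactor : 1 + 2 * x * (1 - 2 * Real.sigmoid x) < 0 := by nlinarith
  nlinarith

noncomputable def maxFLObjective (φ : ℝ → ℝ) (a b w : ℝ) : ℝ :=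
  1 / 2 * φ ((w - a) ^ 2) + 1 / 2 * φ ((w - b) ^ 2)

section MaxFLObjective

variable {φ φ' φ'' : ℝ → ℝ}

lemma hasDerivAt_comp_sub_sq (hφ : ∀ x, HasDerivAt φ (φ' x) x) (p w : ℝ) :
    HasDerivAt (fun w => φ ((w - p) ^ 2)) (2 * (w - p) * φ' ((w - p) ^ 2)) w := by
  have hsq : HasDerivAt (fun w => (w - p) ^ 2) (2 * (w - p)) w := by
    simpa using ((hasDerivAt_id' w).sub_const p).fun_pow 2
  exact ((hφ _).comp w hsq).congr_deriv (by ring)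

lemma hasDerivAt_maxFLObjective (hφ : ∀ x, HasDerivAt φ (φ' x) x) (a b w : ℝ) :
    HasDerivAt (maxFLObjective φ a b)
      ((w - a) * φ' ((w - a) ^ 2) + (w - b) * φ' ((w - b) ^ 2)) w :=
  (((hasDerivAt_comp_sub_sq hφ a w).const_mul (1 / 2)).fun_add
    ((hasDerivAt_comp_sub_sq hφ b w).const_mul (1 / 2))).congr_deriv (by ring)

lemma hasDerivAt_sub_mul_comp_sub_sq (hφ' : ∀ x, HasDerivAt φ' (φ'' x) x) (p w : ℝ) :
    HasDerivAt (fun w => (w - p) * φ' ((w - p) ^ 2))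
      (φ' ((w - p) ^ 2) + 2 * (w - p) ^ 2 * φ'' ((w - p) ^ 2)) w :=
  (((hasDerivAt_id' w).sub_const p).fun_mul (hasDerivAt_comp_sub_sq hφ' p w)).congr_deriv (by ring)

lemma deriv_maxFLObjective_midpoint (hφ : ∀ x, HasDerivAt φ (φ' x) x) (a b : ℝ) :
    deriv (maxFLObjective φ a b) ((a + b) / 2) = 0 := by
  rw [(hasDerivAt_maxFLObjective hφ a b _).deriv]
  have hsq : ((a + b) / 2 - b) ^ 2 = ((a + b) / 2 - a) ^ 2 := by ring
  rw [hsq]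
  ring

lemma deriv_deriv_maxFLObjective_midpoint (hφ : ∀ x, HasDerivAt φ (φ' x) x)
    (hφ' : ∀ x, HasDerivAt φ' (φ'' x) x) (a b : ℝ) :
    deriv (deriv (maxFLObjective φ a b)) ((a + b) / 2) =
      2 * (φ' (((b - a) / 2) ^ 2) + 2 * ((b - a) / 2) ^ 2 * φ'' (((b - a) / 2) ^ 2)) := by
  have hderiv : deriv (maxFLObjective φ a b) =
      fun w => (w - a) * φ' ((w - a) ^ 2) + (w - b) * φ' ((w - b) ^ 2) :=
    funext fun w => (hasDerivAt_maxFLObjective hφ a b w).deriv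
  rw [hderiv, ((hasDerivAt_sub_mul_comp_sub_sq hφ' a _).fun_add
    (hasDerivAt_sub_mul_comp_sub_sq hφ' b _)).deriv]
  have ha : ((a + b) / 2 - a) ^ 2 = ((b - a) / 2) ^ 2 := by ring
  have hb : ((a + b) / 2 - b) ^ 2 = ((b - a) / 2) ^ 2 := by ring
  rw [ha, hb]
  ring

end MaxFLObjective

theorem midpoint_local_max (a b : ℝ) (hab : b - a > 4) :
    IsLocalMax (fun w : ℝ => (1 / 2) * sigmoid ((w - a) ^ 2) + (1 / 2) * sigmoid ((w - b) ^ 2))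
      ((a + b) / 2) ∧
    deriv (fun w : ℝ => (1 / 2) * sigmoid ((w - a) ^ 2) + (1 / 2) * sigmoid ((w - b) ^ 2))
      ((a + b) / 2) = 0 ∧
    deriv (deriv (fun w : ℝ =>
        (1 / 2) * sigmoid ((w - a) ^ 2) + (1 / 2) * sigmoid ((w - b) ^ 2)))
      ((a + b) / 2) < 0 := by
  change IsLocalMax (maxFLObjective sigmoid a b) _ ∧ deriv (maxFLObjective sigmoid a b) _ = 0 ∧
    deriv (deriv (maxFLObjective sigmoid a b)) _ < 0
  have hσ : ∀ x, HasDerivAt sigmoid (Real.sigmoid x * (1 - Real.sigmoid x)) x :=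
    sigmoid_eq_real_sigmoid ▸ Real.hasDerivAt_sigmoid
  have hx : 2 ≤ ((b - a) / 2) ^ 2 := by nlinarith
  have hd1 := deriv_maxFLObjective_midpoint hσ a b
  have hd2 : deriv (deriv (maxFLObjective sigmoid a b)) ((a + b) / 2) < 0 := by
    rw [deriv_deriv_maxFLObjective_midpoint hσ hasDerivAt_sigmoid_mul_one_sub_sigmoid]
    linarith [sigmoid_deriv_add_two_mul_deriv_deriv_neg hx]
  exact ⟨isLocalMax_of_deriv_deriv_neg hd2 hd1
    (hasDerivAt_maxFLObjective hσ a b _).continuousAt, hd1, hd2⟩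
end

section
/- For every real number x with x ≥ 1.022, it holds that 2(1 − 2σ(x²))·x² + 1 < 0, where σ(x) = 1/(1+exp(−x)) is the sigmoid function. -/
theorem sigmoid_hessian_sign (x : ℝ) (hx : x ≥ 1.022) :
    2 * (1 - 2 * sigmoid (x ^ 2)) * x ^ 2 + 1 < 0 := by
  set y := x ^ 2 with hy
  have hyc : y ≥ 1.044484 := by nlinarith
  have hy0 : (0:ℝ) ≤ y := by positivity
  have hsum := Real.sum_le_exp_of_nonneg hy0 7
  norm_num [Finset.sum_range_succ, Nat.factorial] at hsum
  have hpos : 0 < Real.exp y := Real.exp_pos y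
  have hinv : Real.exp y * (Real.exp y)⁻¹ = 1 := mul_inv_cancel₀ (ne_of_gt hpos)
  have hz : (0:ℝ) ≤ y - 1.044484 := by linarith
  have hpoly : (1 + y + y^2/2 + y^3/6 + y^4/24 + y^5/120 + y^6/720) * (2*y-1) > 2*y+1 := by
    nlinarith [pow_nonneg hz 2, pow_nonneg hz 3, pow_nonneg hz 4, pow_nonneg hz 5,
      pow_nonneg hz 6, pow_nonneg hz 7, hz]
  have hexp : Real.exp y * (2*y-1) > 2*y+1 := by nlinarith [hsum, hpoly, hyc, mul_le_mul_of_nonneg_right hsum (by linarith : (0:ℝ) ≤ 2*y-1)]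
  have key : Real.exp (-y) * (2*y+1) < 2*y - 1 := by
    rw [Real.exp_neg]
    nlinarith [hexp, hinv, hpos]
  have hE : 0 < Real.exp (-y) := Real.exp_pos _
  have hd : 0 < 1 + Real.exp (-y) := by linarith
  have hq : (1 + Real.exp (-y)) * sigmoid y = 1 := by
    unfold sigmoid; field_simp
  nlinarith [key, hd, hq, hE]
end

section
/- The function g : ℝ → ℝ defined by g(x) = σ(x²)·(1 − σ(x²))·x, where σ(x) = 1/(1+exp(−x)) is the sigmoid function, is strictly decreasing on the interval (2, ∞). -/
namespace Real

lemma hasDerivAt_sigmoid_mul_one_sub_sigmoid (x : ℝ) :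
    HasDerivAt (fun x => sigmoid x * (1 - sigmoid x))
      (sigmoid x * (1 - sigmoid x) * (1 - 2 * sigmoid x)) x :=
  ((hasDerivAt_sigmoid x).fun_mul ((hasDerivAt_sigmoid x).const_sub 1)).congr_deriv (by ring)

lemma div_add_two_lt_two_mul_sigmoid_sub_one {t : ℝ} (ht : 0 < t) :
    t / (t + 2) < 2 * sigmoid t - 1 := by
  have hexp : t + 1 < exp t := add_one_lt_exp ht.ne'
  have hsig : 2 * sigmoid t - 1 = (exp t - 1) / (exp t + 1) := by
    rw [sigmoid_def, exp_neg]
    field_simp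
    ring
  rw [hsig, div_lt_div_iff₀ (by linarith) (by positivity)]
  nlinarith

lemma one_add_two_mul_one_sub_two_mul_sigmoid_neg {t : ℝ} (ht : 2 ≤ t) :
    1 + 2 * t * (1 - 2 * sigmoid t) < 0 := by
  have key := div_add_two_lt_two_mul_sigmoid_sub_one (by linarith : 0 < t)
  rw [div_lt_iff₀ (by linarith)] at key
  nlinarith

end Real

theorem g_strict_anti :
    StrictAntiOn (fun x : ℝ => sigmoid (x ^ 2) * (1 - sigmoid (x ^ 2)) * x)
      (Set.Ioi 2) := by
  rw [sigmoid_eq_real_sigmoid]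
  have hderiv (x : ℝ) : HasDerivAt (fun x => Real.sigmoid (x ^ 2) * (1 - Real.sigmoid (x ^ 2)) * x)
      (Real.sigmoid (x ^ 2) * (1 - Real.sigmoid (x ^ 2)) *
        (1 + 2 * x ^ 2 * (1 - 2 * Real.sigmoid (x ^ 2)))) x := by
    refine (((Real.hasDerivAt_sigmoid_mul_one_sub_sigmoid (x ^ 2)).comp x
      (hasDerivAt_pow 2 x)).fun_mul (hasDerivAt_id x)).congr_deriv ?_
    simp only [Nat.cast_ofNat, Nat.add_one_sub_one, pow_one, id_eq, Function.comp_apply, mul_one]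
    ring
  refine strictAntiOn_of_hasDerivWithinAt_neg (convex_Ioi 2)
    (fun x _ => (hderiv x).continuousAt.continuousWithinAt)
    (fun x _ => (hderiv x).hasDerivWithinAt) fun x hx => ?_
  rw [interior_Ioi, Set.mem_Ioi] at hx
  exact mul_neg_of_pos_of_neg
    (mul_pos (Real.sigmoid_pos _) (sub_pos.mpr (Real.sigmoid_lt_one _)))
    (Real.one_add_two_mul_one_sub_two_mul_sigmoid_neg (by nlinarith))
end

section
/- Let E be a real inner product space, let M ≥ 1 be a natural number, and let g₁, …, g_M ∈ E, q₁, …, q_M ∈ [0,1], and L_c ≥ 0, β ≥ 0, κ ≥ 0 be given. Suppose ‖g_i‖ ≤ L_c for every i, and suppose the bounded dissimilarity condition (1/M)·Σᵢ‖gᵢ‖² ≤ β²·‖(1/M)·Σᵢ gᵢ‖² + κ² holds. Then (1/M)·Σᵢ‖qᵢ·gᵢ‖² ≤ 2β²·‖(1/M)·Σᵢ qᵢ·gᵢ‖² + 4β²L_c² + κ². -/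
theorem maxfl_bounded_dissimilarity
    {E : Type*} [NormedAddCommGroup E] [InnerProductSpace ℝ E]
    (M : ℕ) (hM : 1 ≤ M) (g : Fin M → E) (q : Fin M → ℝ)
    (Lc β κ : ℝ) (hLc : 0 ≤ Lc) (hβ : 0 ≤ β) (hκ : 0 ≤ κ)
    (hq : ∀ i, q i ∈ Set.Icc (0 : ℝ) 1)
    (hg : ∀ i, ‖g i‖ ≤ Lc)
    (hdis : (1 / (M : ℝ)) * ∑ i, ‖g i‖ ^ 2
      ≤ β ^ 2 * ‖(1 / (M : ℝ)) • ∑ i, g i‖ ^ 2 + κ ^ 2) :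
    (1 / (M : ℝ)) * ∑ i, ‖q i • g i‖ ^ 2
      ≤ 2 * β ^ 2 * ‖(1 / (M : ℝ)) • ∑ i, q i • g i‖ ^ 2
        + 4 * β ^ 2 * Lc ^ 2 + κ ^ 2 := by
  have hMpos : (0 : ℝ) < M := by exact_mod_cast Nat.lt_of_lt_of_le Nat.zero_lt_one hM
  set a : E := (1 / (M : ℝ)) • ∑ i, g i with ha
  set b : E := (1 / (M : ℝ)) • ∑ i, q i • g i with hb
  -- Step 1: LHS ≤ β² ‖a‖² + κ²
  have hqg : ∀ i, ‖q i • g i‖ ^ 2 ≤ ‖g i‖ ^ 2 := by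
    intro i
    have h0 := (hq i).1
    have h1 := (hq i).2
    have : ‖q i • g i‖ = |q i| * ‖g i‖ := norm_smul _ _
    rw [this, abs_of_nonneg h0]
    have hn : 0 ≤ ‖g i‖ := norm_nonneg _
    have hq2 : q i ^ 2 ≤ 1 := by nlinarith
    have := mul_le_mul_of_nonneg_right hq2 (sq_nonneg ‖g i‖)
    nlinarith
  have step1 : (1 / (M : ℝ)) * ∑ i, ‖q i • g i‖ ^ 2
      ≤ β ^ 2 * ‖a‖ ^ 2 + κ ^ 2 := by
    refine le_trans ?_ hdis
    apply mul_le_mul_of_nonneg_left (Finset.sum_le_sum fun i _ => hqg i)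
    positivity
  -- Step 2: bound ‖a - b‖ ≤ Lc
  have hab : ‖a - b‖ ≤ Lc := by
    have : a - b = (1 / (M : ℝ)) • ∑ i, (g i - q i • g i) := by
      rw [ha, hb, ← smul_sub, Finset.sum_sub_distrib]
    rw [this, norm_smul]
    have hsum : ‖∑ i, (g i - q i • g i)‖ ≤ (M : ℝ) * Lc := by
      refine le_trans (norm_sum_le _ _) ?_
      have : ∀ i ∈ Finset.univ, ‖g i - q i • g i‖ ≤ Lc := by
        intro i _
        have h0 := (hq i).1
        have h1 := (hq i).2
        have : g i - q i • g i = (1 - q i) • g i := by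
          rw [sub_smul, one_smul]
        rw [this, norm_smul, Real.norm_eq_abs, abs_of_nonneg (by linarith : (0:ℝ) ≤ 1 - q i)]
        have := hg i
        have hn : 0 ≤ ‖g i‖ := norm_nonneg _
        nlinarith
      calc ∑ i, ‖g i - q i • g i‖ ≤ ∑ _i : Fin M, Lc := Finset.sum_le_sum this
        _ = (M : ℝ) * Lc := by simp [mul_comm]
    rw [Real.norm_eq_abs, abs_of_pos (by positivity)]
    calc (1 / (M : ℝ)) * ‖∑ i, (g i - q i • g i)‖
        ≤ (1 / (M : ℝ)) * ((M : ℝ) * Lc) := by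
          apply mul_le_mul_of_nonneg_left hsum; positivity
      _ = Lc := by field_simp
  -- Step 3: ‖a‖² ≤ 2‖b‖² + 2‖a-b‖² ≤ 2‖b‖² + 2Lc²
  have ha2 : ‖a‖ ^ 2 ≤ 2 * ‖b‖ ^ 2 + 2 * ‖a - b‖ ^ 2 := by
    have ht : ‖a‖ ≤ ‖b‖ + ‖a - b‖ := by
      have h := norm_add_le b (a - b)
      simpa using h
    nlinarith [sq_nonneg (‖b‖ - ‖a - b‖), norm_nonneg b, norm_nonneg (a - b), norm_nonneg a]
  have habsq : ‖a - b‖ ^ 2 ≤ Lc ^ 2 := by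
    nlinarith [norm_nonneg (a - b)]
  nlinarith [step1, sq_nonneg β]
end

section
/- Let τ ≥ 1 be a natural number and let η, σ_g, L, G be nonnegative reals with 4L²η²τ² ≤ 1/2. Suppose a₀, a₁, …, a_{τ−1} are nonnegative reals satisfying, for every r with 0 ≤ r ≤ τ−1, the inequality a_r ≤ 2η²σ_g²·r + 4L²η²τ·(Σ_{l=0}^{τ−1} a_l) + 4η²τ²·G. Then Σ_{r=0}^{τ−1} a_r ≤ 2η²σ_g²τ² + 8η²τ³·G. -/
theorem client_drift_bound (τ : ℕ) (hτ : 1 ≤ τ) (η σg L G : ℝ)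
    (hη : 0 ≤ η) (hσ : 0 ≤ σg) (hL : 0 ≤ L) (hG : 0 ≤ G)
    (hlr : 4 * L ^ 2 * η ^ 2 * (τ : ℝ) ^ 2 ≤ 1 / 2)
    (a : ℕ → ℝ) (ha : ∀ r, 0 ≤ a r)
    (hrec : ∀ r, r < τ →
      a r ≤ 2 * η ^ 2 * σg ^ 2 * (r : ℝ)
        + 4 * L ^ 2 * η ^ 2 * (τ : ℝ) * (∑ l ∈ Finset.range τ, a l)
        + 4 * η ^ 2 * (τ : ℝ) ^ 2 * G) :
    ∑ r ∈ Finset.range τ, a r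
      ≤ 2 * η ^ 2 * σg ^ 2 * (τ : ℝ) ^ 2 + 8 * η ^ 2 * (τ : ℝ) ^ 3 * G := by
  set S : ℝ := ∑ l ∈ Finset.range τ, a l with hS
  have hS0 : 0 ≤ S := Finset.sum_nonneg fun i _ => ha i
  have hsum : S ≤ ∑ r ∈ Finset.range τ, (2 * η ^ 2 * σg ^ 2 * (r : ℝ)
        + 4 * L ^ 2 * η ^ 2 * (τ : ℝ) * S
        + 4 * η ^ 2 * (τ : ℝ) ^ 2 * G) :=
    Finset.sum_le_sum fun r hr => hrec r (Finset.mem_range.mp hr)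
  have hr' : ∀ n : ℕ, ∑ r ∈ Finset.range n, (r : ℝ) = (n : ℝ) * ((n : ℝ) - 1) / 2 := by
    intro n
    induction n with
    | zero => simp
    | succ m ih => rw [Finset.sum_range_succ, ih]; push_cast; ring
  have hr := hr' τ
  have hsum2 : S ≤ 2 * η ^ 2 * σg ^ 2 * ((τ : ℝ) * ((τ : ℝ) - 1) / 2)
      + (τ : ℝ) * (4 * L ^ 2 * η ^ 2 * (τ : ℝ) * S)
      + (τ : ℝ) * (4 * η ^ 2 * (τ : ℝ) ^ 2 * G) := by
    calc S ≤ _ := hsum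
    _ = _ := by
      rw [Finset.sum_add_distrib, Finset.sum_add_distrib, ← Finset.mul_sum, hr,
        Finset.sum_const, Finset.sum_const, Finset.card_range, nsmul_eq_mul, nsmul_eq_mul]
  have hτ1 : (1 : ℝ) ≤ (τ : ℝ) := by exact_mod_cast hτ
  nlinarith [mul_nonneg (by linarith : (0:ℝ) ≤ 1 / 2 - 4 * L ^ 2 * η ^ 2 * (τ : ℝ) ^ 2) hS0,
    mul_nonneg (mul_nonneg (by positivity : (0:ℝ) ≤ η ^ 2 * σg ^ 2) (le_trans zero_le_one hτ1)) (le_trans zero_le_one hτ1)]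
end
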